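/- (Relation between guessed and exact quantum work.) The one-time-measurement average of the guessed quantum work and the two-time-measurement average of the exact work satisfy Σ_i (exp(−β ε_i)/Z_S0)·W̃(i) = ⟨W⟩_TPM + Re Tr[(1_n ⊗ H_B)·(Θ − U (τ_S0 ⊗ τ_B) U†)], where ⟨W⟩_TPM = Σ_{i,j,k,l} P(i,j,k,l)·W(i,j,k,l). -/

import Mathlib

open Matrix Kronecker BigOperators Finset

noncomputable section

/-- Partial trace over the bath (second tensor factor). -/
def ptraceB {n m : ℕ} (X : Matrix (Fin n × Fin m) (Fin n × Fin m) ℂ) :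
    Matrix (Fin n) (Fin n) ℂ :=
  Matrix.of fun i i' => ∑ j, X (i, j) (i', j)

/-- Outer product `|v⟩⟨v|`. -/
def outer {k : ℕ} (v : Fin k → ℂ) : Matrix (Fin k) (Fin k) ℂ :=
  Matrix.vecMulVec v (star v)

/-- Partition function `Z = Tr exp (−β H)` (real part of the trace). -/
def Zpart (β : ℝ) {k : ℕ} (H : Matrix (Fin k) (Fin k) ℂ) : ℝ :=
  (NormedSpace.exp ((-β) • H)).trace.re

/-- Gibbs state `exp (−β H) / Z`. -/
def gibbs (β : ℝ) {k : ℕ} (H : Matrix (Fin k) (Fin k) ℂ) : Matrix (Fin k) (Fin k) ℂ :=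
  ((Zpart β H : ℂ)⁻¹) • NormedSpace.exp ((-β) • H)

/-- The channel `Φ(ρ) = Tr_B [U (ρ ⊗ τB) U†]`. -/
def channel {n m : ℕ} (U : Matrix (Fin n × Fin m) (Fin n × Fin m) ℂ)
    (τB : Matrix (Fin m) (Fin m) ℂ) (ρ : Matrix (Fin n) (Fin n) ℂ) :
    Matrix (Fin n) (Fin n) ℂ :=
  ptraceB (U * (ρ ⊗ₖ τB) * Uᴴ)

/-- Outer product on an arbitrary index type. -/
def outer' {ι : Type*} (v : ι → ℂ) : Matrix ι ι ℂ := Matrix.vecMulVec v (star v)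

lemma outer_eq_outer' {k : ℕ} (v : Fin k → ℂ) : outer v = outer' v := rfl

lemma outer'_apply {ι : Type*} (v : ι → ℂ) (x y : ι) :
    outer' v x y = v x * (starRingEnd ℂ) (v y) := rfl

section spec
variable {ι : Type*} [Fintype ι] [DecidableEq ι]
  (H : Matrix ι ι ℂ) (v : ι → ι → ℂ) (lam : ι → ℝ)

/-- Matrix whose columns are the `v i`. -/
def eigMat (v : ι → ι → ℂ) : Matrix ι ι ℂ := Matrix.of fun x i => v i x

variable (hv : ∀ i i', ∑ x, (starRingEnd ℂ) (v i x) * v i' x = if i = i' then 1 else 0)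
  (heig : ∀ i, H *ᵥ v i = (lam i : ℂ) • v i)

include hv in
lemma eigMat_conj_mul : (eigMat v)ᴴ * eigMat v = 1 := by
  ext i i'
  simpa [Matrix.mul_apply, eigMat, Matrix.conjTranspose_apply, Matrix.one_apply] using hv i i'

include hv in
lemma eigMat_mul_conj : eigMat v * (eigMat v)ᴴ = 1 :=
  mul_eq_one_comm.mp (eigMat_conj_mul v hv)

lemma conj_diag (c : ι → ℂ) :
    eigMat v * Matrix.diagonal c * (eigMat v)ᴴ = ∑ i, c i • outer' (v i) := by
  ext x y
  simp only [Matrix.mul_apply, Matrix.diagonal_apply, Matrix.conjTranspose_apply,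
    Matrix.sum_apply, Matrix.smul_apply, outer'_apply, eigMat, Matrix.of_apply, smul_eq_mul]
  simp only [mul_ite, mul_zero, ite_mul, zero_mul, Finset.sum_ite_eq', Finset.mem_univ,
    if_true]
  exact Finset.sum_congr rfl fun i _ => by rw [RCLike.star_def]; ring

include hv in
lemma sum_outer_eq_one : ∑ i, outer' (v i) = 1 := by
  have h := eigMat_mul_conj v hv
  have := conj_diag v (fun _ => (1 : ℂ))
  simp only [Matrix.diagonal_one, Matrix.mul_one, one_smul] at this
  rw [← this, h]

include hv heig in
lemma spectral_decomp : H = ∑ i, (lam i : ℂ) • outer' (v i) := by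
  have hmul : H * eigMat v = eigMat v * Matrix.diagonal (fun i => (lam i : ℂ)) := by
    ext x i
    have := congrFun (heig i) x
    simp only [Matrix.mulVec, dotProduct, Pi.smul_apply, smul_eq_mul] at this
    simp [Matrix.mul_apply, eigMat, Matrix.diagonal_apply, this, mul_comm]
  calc H = H * (eigMat v * (eigMat v)ᴴ) := by rw [eigMat_mul_conj v hv, Matrix.mul_one]
    _ = (H * eigMat v) * (eigMat v)ᴴ := by rw [Matrix.mul_assoc]
    _ = eigMat v * Matrix.diagonal (fun i => (lam i : ℂ)) * (eigMat v)ᴴ := by rw [hmul]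
    _ = _ := conj_diag v _

include hv heig in
lemma exp_spectral (β : ℝ) :
    NormedSpace.exp ((-β) • H) = ∑ i, ((Real.exp (-(β * lam i)) : ℝ) : ℂ) • outer' (v i) := by
  have hmul : H * eigMat v = eigMat v * Matrix.diagonal (fun i => (lam i : ℂ)) := by
    ext x i
    have := congrFun (heig i) x
    simp only [Matrix.mulVec, dotProduct, Pi.smul_apply, smul_eq_mul] at this
    simp [Matrix.mul_apply, eigMat, Matrix.diagonal_apply, this, mul_comm]
  have hinv : (eigMat v)⁻¹ = (eigMat v)ᴴ :=
    Matrix.inv_eq_right_inv (eigMat_mul_conj v hv)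
  have hH : (-β) • H = eigMat v * Matrix.diagonal (fun i => ((-(β * lam i) : ℝ) : ℂ)) * (eigMat v)⁻¹ := by
    rw [hinv]
    have hd : H = eigMat v * Matrix.diagonal (fun i => (lam i : ℂ)) * (eigMat v)ᴴ := by
      calc H = H * (eigMat v * (eigMat v)ᴴ) := by rw [eigMat_mul_conj v hv, Matrix.mul_one]
        _ = (H * eigMat v) * (eigMat v)ᴴ := by rw [Matrix.mul_assoc]
        _ = _ := by rw [hmul]
    rw [hd, ← Matrix.smul_mul, ← Matrix.mul_smul]
    congr 2
    ext a b
    simp only [Matrix.smul_apply, Matrix.diagonal_apply]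
    split <;> push_cast <;> simp
  have hunit : IsUnit (eigMat v) := by
    refine (Matrix.isUnit_iff_isUnit_det _).mpr (Matrix.isUnit_det_of_right_inverse (eigMat_mul_conj v hv))
  rw [hH, Matrix.exp_conj _ _ hunit, Matrix.exp_diagonal, hinv]
  have hexp : NormedSpace.exp (fun i => ((-(β * lam i) : ℝ) : ℂ))
      = fun i => ((Real.exp (-(β * lam i)) : ℝ) : ℂ) := by
    rw [Pi.exp_def]
    funext i
    rw [← Complex.exp_eq_exp_ℂ]
    exact_mod_cast (Complex.ofReal_exp _).symm
  rw [hexp, conj_diag]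

lemma trace_outer' {ι : Type*} [Fintype ι] (v : ι → ℂ) :
    (outer' v).trace = ∑ x, (starRingEnd ℂ) (v x) * v x := by
  simp [Matrix.trace, Matrix.diag, outer'_apply, mul_comm]

end spec

section specFin
variable {k : ℕ} (H : Matrix (Fin k) (Fin k) ℂ) (v : Fin k → Fin k → ℂ) (lam : Fin k → ℝ)
variable (hv : ∀ i i', ∑ x, (starRingEnd ℂ) (v i x) * v i' x = if i = i' then 1 else 0)
  (heig : ∀ i, H *ᵥ v i = (lam i : ℂ) • v i)

include hv heig in
lemma Zpart_spectral (β : ℝ) : Zpart β H = ∑ i, Real.exp (-(β * lam i)) := by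
  unfold Zpart
  rw [exp_spectral H v lam hv heig β, Matrix.trace_sum]
  have h1 : ∀ i : Fin k, (((Real.exp (-(β * lam i)) : ℝ) : ℂ) • outer' (v i)).trace
      = ((Real.exp (-(β * lam i)) : ℝ) : ℂ) := by
    intro i
    rw [Matrix.trace_smul, trace_outer', hv i i]
    simp
  rw [Finset.sum_congr rfl fun i _ => h1 i]
  rw [Complex.re_sum]
  exact Finset.sum_congr rfl fun i _ => Complex.ofReal_re _

include hv heig in
lemma gibbs_spectral (β : ℝ) :
    gibbs β H = ∑ i, ((Real.exp (-(β * lam i)) / Zpart β H : ℝ) : ℂ) • outer' (v i) := by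
  unfold gibbs
  rw [exp_spectral H v lam hv heig β, Finset.smul_sum]
  refine Finset.sum_congr rfl fun i _ => ?_
  rw [smul_smul]
  congr 1
  push_cast
  ring

end specFin


lemma outer'_conjU {ι : Type*} [Fintype ι] (U : Matrix ι ι ℂ) (v : ι → ℂ) :
    U * outer' v * Uᴴ = outer' (U *ᵥ v) := by
  ext x y
  simp only [Matrix.mul_apply, outer'_apply, Matrix.conjTranspose_apply, Matrix.mulVec,
    dotProduct, map_sum, Finset.sum_mul, Finset.mul_sum, _root_.map_mul,
    RCLike.star_def, RingHom.id_apply]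
  exact Finset.sum_congr rfl fun a _ => Finset.sum_congr rfl fun b _ => by ring

lemma trace_outer'_outer' {ι : Type*} [Fintype ι] (w u : ι → ℂ) :
    (outer' w * outer' u).trace
      = (∑ x, (starRingEnd ℂ) (w x) * u x) * (starRingEnd ℂ) (∑ x, (starRingEnd ℂ) (w x) * u x) := by
  simp only [Matrix.trace, Matrix.diag, Matrix.mul_apply, outer'_apply, map_sum,
    RingHomCompTriple.comp_apply, Complex.conj_conj, Finset.sum_mul, Finset.mul_sum,
    _root_.map_mul, RingHom.id_apply]
  exact Finset.sum_congr rfl fun a _ => Finset.sum_congr rfl fun b _ => by ring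

lemma trace_mul_ptraceB {n m : ℕ} (M : Matrix (Fin n) (Fin n) ℂ)
    (X : Matrix (Fin n × Fin m) (Fin n × Fin m) ℂ) :
    (M * ptraceB X).trace = ((M ⊗ₖ (1 : Matrix (Fin m) (Fin m) ℂ)) * X).trace := by
  simp only [Matrix.trace, Matrix.diag, Matrix.mul_apply, ptraceB, Matrix.of_apply,
    Fintype.sum_prod_type, Matrix.kroneckerMap_apply, Matrix.one_apply, mul_ite, mul_one,
    mul_zero, ite_mul, zero_mul, Finset.sum_ite_eq', Finset.sum_ite_eq, Finset.mem_univ,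
    if_true, Finset.mul_sum]
  exact Finset.sum_congr rfl fun i _ => Finset.sum_comm

lemma outer'_kron {n m : ℕ} (a : Fin n → ℂ) (b : Fin m → ℂ) :
    outer' a ⊗ₖ outer' b = outer' (fun x : Fin n × Fin m => a x.1 * b x.2) := by
  ext x y
  simp only [Matrix.kroneckerMap_apply, outer'_apply, _root_.map_mul]
  ring

lemma kron_sum_smul_left {n m : ℕ} {α : Type*} [Fintype α] (c : α → ℂ)
    (A : α → Matrix (Fin n) (Fin n) ℂ) (B : Matrix (Fin m) (Fin m) ℂ) :
    (∑ a, c a • A a) ⊗ₖ B = ∑ a, c a • (A a ⊗ₖ B) := by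
  ext x y
  simp only [Matrix.kroneckerMap_apply, Matrix.sum_apply, Matrix.smul_apply, smul_eq_mul,
    Finset.sum_mul]
  exact Finset.sum_congr rfl fun a _ => by ring

lemma kron_sum_smul_right {n m : ℕ} {α : Type*} [Fintype α] (c : α → ℂ)
    (A : Matrix (Fin n) (Fin n) ℂ) (B : α → Matrix (Fin m) (Fin m) ℂ) :
    A ⊗ₖ (∑ a, c a • B a) = ∑ a, c a • (A ⊗ₖ B a) := by
  ext x y
  simp only [Matrix.kroneckerMap_apply, Matrix.sum_apply, Matrix.smul_apply, smul_eq_mul,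
    Finset.mul_sum]
  exact Finset.sum_congr rfl fun a _ => by ring

lemma trace_mul_outer' {ι : Type*} [Fintype ι] (M : Matrix ι ι ℂ) (w : ι → ℂ) :
    (M * outer' w).trace = ∑ x, (starRingEnd ℂ) (w x) * (M *ᵥ w) x := by
  simp only [Matrix.trace, Matrix.diag, Matrix.mul_apply, outer'_apply, Matrix.mulVec,
    dotProduct, Finset.mul_sum]
  exact Finset.sum_congr rfl fun a _ => Finset.sum_congr rfl fun b _ => by ring

lemma trace_conjU {ι : Type*} [Fintype ι] [DecidableEq ι] (U A : Matrix ι ι ℂ)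
    (h : Uᴴ * U = 1) : (U * A * Uᴴ).trace = A.trace := by
  rw [Matrix.trace_mul_cycle, h, Matrix.one_mul]

lemma sum_mul_trace {ι α : Type*} [Fintype ι] [Fintype α] (c : α → ℂ)
    (K : Matrix ι ι ℂ) (M : α → Matrix ι ι ℂ) :
    ∑ a, c a * (K * M a).trace = (K * ∑ a, c a • M a).trace := by
  simp [Matrix.mul_sum, Matrix.mul_smul, Matrix.trace_smul, smul_eq_mul]

lemma sum_mul_trace' {ι α : Type*} [Fintype ι] [Fintype α] (c : α → ℂ)
    (M : α → Matrix ι ι ℂ) (N : Matrix ι ι ℂ) :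
    ∑ a, c a * (M a * N).trace = ((∑ a, c a • M a) * N).trace := by
  simp [Matrix.sum_mul, Matrix.smul_mul, Matrix.trace_smul, smul_eq_mul]

lemma prod_orthonormal {n m : ℕ} (e : Fin n → Fin n → ℂ) (f : Fin m → Fin m → ℂ)
    (he : ∀ i i', ∑ x, (starRingEnd ℂ) (e i x) * e i' x = if i = i' then 1 else 0)
    (hf : ∀ j j', ∑ x, (starRingEnd ℂ) (f j x) * f j' x = if j = j' then 1 else 0) :
    ∀ p p' : Fin n × Fin m,
      ∑ x : Fin n × Fin m, (starRingEnd ℂ) (e p.1 x.1 * f p.2 x.2) * (e p'.1 x.1 * f p'.2 x.2)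
        = if p = p' then 1 else 0 := by
  rintro ⟨i, j⟩ ⟨i', j'⟩
  rw [Fintype.sum_prod_type]
  have h1 : (∑ a, ∑ b, (starRingEnd ℂ) (e i a * f j b) * (e i' a * f j' b))
      = (∑ a, (starRingEnd ℂ) (e i a) * e i' a) * (∑ b, (starRingEnd ℂ) (f j b) * f j' b) := by
    rw [Finset.sum_mul_sum]
    exact Finset.sum_congr rfl fun a _ => Finset.sum_congr rfl fun b _ => by
      rw [_root_.map_mul]; ring
  rw [h1, he, hf]
  simp only [Prod.mk.injEq, ite_and]
  split_ifs <;> simp_all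

lemma weight_kron_sum {n m : ℕ} (a : Fin n → ℝ) (b : Fin m → ℝ)
    (A : Fin n → Matrix (Fin n) (Fin n) ℂ) (B : Fin m → Matrix (Fin m) (Fin m) ℂ) :
    ∑ k, ∑ l, ((a k + b l : ℝ) : ℂ) • (A k ⊗ₖ B l)
      = (∑ k, (a k : ℂ) • A k) ⊗ₖ (∑ l, B l) + (∑ k, A k) ⊗ₖ (∑ l, (b l : ℂ) • B l) := by
  ext x y
  simp only [Matrix.sum_apply, Matrix.smul_apply, Matrix.kroneckerMap_apply,
    Matrix.add_apply, smul_eq_mul]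
  rw [Finset.sum_mul_sum, Finset.sum_mul_sum, ← Finset.sum_add_distrib]
  refine Finset.sum_congr rfl fun k _ => ?_
  rw [← Finset.sum_add_distrib]
  refine Finset.sum_congr rfl fun l _ => ?_
  push_cast
  ring

theorem guessed_vs_exact_work
    (n m : ℕ) (hn : 1 ≤ n) (hm : 1 ≤ m)
    (β : ℝ) (hβ : 0 < β)
    (HS0 HSt : Matrix (Fin n) (Fin n) ℂ)
    (hHS0 : HS0.IsHermitian) (hHSt : HSt.IsHermitian)
    (HB : Matrix (Fin m) (Fin m) ℂ) (hHB : HB.IsHermitian)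
    (e : Fin n → Fin n → ℂ) (ε : Fin n → ℝ)
    (he : ∀ i i', ∑ x, (starRingEnd ℂ) (e i x) * e i' x = if i = i' then 1 else 0)
    (heig : ∀ i, HS0 *ᵥ e i = (ε i : ℂ) • e i)
    (e' : Fin n → Fin n → ℂ) (ε' : Fin n → ℝ)
    (he' : ∀ k k', ∑ x, (starRingEnd ℂ) (e' k x) * e' k' x = if k = k' then 1 else 0)
    (heig' : ∀ k, HSt *ᵥ e' k = (ε' k : ℂ) • e' k)
    (f : Fin m → Fin m → ℂ) (q : Fin m → ℝ)
    (hf : ∀ j j', ∑ x, (starRingEnd ℂ) (f j x) * f j' x = if j = j' then 1 else 0)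
    (hfeig : ∀ j, HB *ᵥ f j = (q j : ℂ) • f j)
    (U : Matrix (Fin n × Fin m) (Fin n × Fin m) ℂ)
    (hU : U ∈ Matrix.unitaryGroup (Fin n × Fin m) ℂ)
    (E : Fin n → ℝ)
    (hE : ∀ i, E i = ((HSt * channel U (gibbs β HB) (outer (e i))).trace).re)
    (Zt : ℝ) (hZt : Zt = ∑ i, Real.exp (-(β * E i)))
    (p : Fin n → ℝ) (hp : ∀ i, p i = Real.exp (-(β * E i)) / Zt)
    (Θ : Matrix (Fin n × Fin m) (Fin n × Fin m) ℂ)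
    (hΘ : Θ = ∑ i, (p i : ℂ) • (U * (outer (e i) ⊗ₖ gibbs β HB) * Uᴴ))
    (Qg : ℝ)
    (hQg : Qg = ((HB * gibbs β HB).trace).re
      - ((((1 : Matrix (Fin n) (Fin n) ℂ) ⊗ₖ HB) * Θ).trace).re)
    (Wg : Fin n → ℝ) (hWg : ∀ i, Wg i = (E i - ε i) - Qg)
    (P : Fin n → Fin m → Fin n → Fin m → ℝ)
    (hP : ∀ i j k l, P i j k l = (Real.exp (-(β * ε i)) / Zpart β HS0)
      * (Real.exp (-(β * q j)) / Zpart β HB)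
      * (‖∑ x, (starRingEnd ℂ) (e' k x.1 * f l x.2)
          * (U *ᵥ fun y : Fin n × Fin m => e i y.1 * f j y.2) x‖) ^ 2)
    (Wv : Fin n → Fin m → Fin n → Fin m → ℝ)
    (hWv : ∀ i j k l, Wv i j k l = (ε' k + q l) - (ε i + q j))
    (WTPM : ℝ) (hWTPM : WTPM = ∑ i, ∑ j, ∑ k, ∑ l, P i j k l * Wv i j k l) :
    ∑ i, (Real.exp (-(β * ε i)) / Zpart β HS0) * Wg i
      = WTPM + ((((1 : Matrix (Fin n) (Fin n) ℂ) ⊗ₖ HB)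
          * (Θ - U * (gibbs β HS0 ⊗ₖ gibbs β HB) * Uᴴ)).trace).re := by
  classical
  have hnE : Nonempty (Fin n) := ⟨⟨0, hn⟩⟩
  have hmE : Nonempty (Fin m) := ⟨⟨0, hm⟩⟩
  have hU1 : Uᴴ * U = 1 := by
    simpa [Matrix.star_eq_conjTranspose] using hU.1
  -- Gibbs and partition function expansions
  have hτS := gibbs_spectral HS0 e ε he heig β
  have hτB := gibbs_spectral HB f q hf hfeig β
  have hZS := Zpart_spectral HS0 e ε he heig β
  have hZB := Zpart_spectral HB f q hf hfeig β
  have hZSpos : 0 < Zpart β HS0 := by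
    rw [hZS]; exact Finset.sum_pos (fun i _ => Real.exp_pos _) Finset.univ_nonempty
  have hZBpos : 0 < Zpart β HB := by
    rw [hZB]; exact Finset.sum_pos (fun j _ => Real.exp_pos _) Finset.univ_nonempty
  have hgsum : ∑ i, Real.exp (-(β * ε i)) / Zpart β HS0 = 1 := by
    rw [← Finset.sum_div, ← hZS, div_self hZSpos.ne']
  have hbsum : ∑ j, Real.exp (-(β * q j)) / Zpart β HB = 1 := by
    rw [← Finset.sum_div, ← hZB, div_self hZBpos.ne']
  -- spectral sums
  have hHStspec : HSt = ∑ k, (ε' k : ℂ) • outer' (e' k) := spectral_decomp HSt e' ε' he' heig'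
  have hHBspec : HB = ∑ l, (q l : ℂ) • outer' (f l) := spectral_decomp HB f q hf hfeig
  have hIe' : ∑ k, outer' (e' k) = 1 := sum_outer_eq_one e' he'
  have hIf : ∑ l, outer' (f l) = 1 := sum_outer_eq_one f hf
  have hwF := prod_orthonormal e' f he' hf
  have hvF := prod_orthonormal e f he hf
  -- the K operator
  have hK : ∑ k, ∑ l, ((ε' k + q l : ℝ) : ℂ) • (outer' (e' k) ⊗ₖ outer' (f l))
      = HSt ⊗ₖ (1 : Matrix (Fin m) (Fin m) ℂ)
        + (1 : Matrix (Fin n) (Fin n) ℂ) ⊗ₖ HB := by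
    rw [weight_kron_sum, hIf, hIe', ← hHStspec, ← hHBspec]
  -- τS ⊗ τB expansion
  have hkronτ : gibbs β HS0 ⊗ₖ gibbs β HB
      = ∑ i, ∑ j, ((Real.exp (-(β * ε i)) / Zpart β HS0
            * (Real.exp (-(β * q j)) / Zpart β HB) : ℝ) : ℂ)
          • (outer' (e i) ⊗ₖ outer' (f j)) := by
    conv_lhs => rw [hτS, hτB]
    rw [kron_sum_smul_left]
    refine Finset.sum_congr rfl fun i _ => ?_
    rw [kron_sum_smul_right, Finset.smul_sum]
    refine Finset.sum_congr rfl fun j _ => ?_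
    rw [smul_smul]
    congr 1
    push_cast
    ring
  -- X as a sum of conjugated outer products
  have hX : U * (gibbs β HS0 ⊗ₖ gibbs β HB) * Uᴴ
      = ∑ i, ∑ j, ((Real.exp (-(β * ε i)) / Zpart β HS0
            * (Real.exp (-(β * q j)) / Zpart β HB) : ℝ) : ℂ)
          • outer' (U *ᵥ fun x : Fin n × Fin m => e i x.1 * f j x.2) := by
    rw [hkronτ]
    simp only [Matrix.sum_mul, Matrix.mul_sum, Matrix.smul_mul, Matrix.mul_smul]
    refine Finset.sum_congr rfl fun i _ => Finset.sum_congr rfl fun j _ => ?_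
    rw [outer'_kron, outer'_conjU]
  -- the E values as traces on the composite space
  have hE' : ∀ i, E i = (((HSt ⊗ₖ (1 : Matrix (Fin m) (Fin m) ℂ))
      * (U * (outer' (e i) ⊗ₖ gibbs β HB) * Uᴴ)).trace).re := by
    intro i
    rw [hE i]
    congr 1
    unfold channel
    rw [trace_mul_ptraceB, outer_eq_outer']
  -- C3 : weighted average of E equals the HSt ⊗ 1 trace term
  have hC3 : ∑ i, (Real.exp (-(β * ε i)) / Zpart β HS0) * E i
      = (((HSt ⊗ₖ (1 : Matrix (Fin m) (Fin m) ℂ))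
          * (U * (gibbs β HS0 ⊗ₖ gibbs β HB) * Uᴴ)).trace).re := by
    have hmix : U * (gibbs β HS0 ⊗ₖ gibbs β HB) * Uᴴ
        = ∑ i, ((Real.exp (-(β * ε i)) / Zpart β HS0 : ℝ) : ℂ)
            • (U * (outer' (e i) ⊗ₖ gibbs β HB) * Uᴴ) := by
      conv_lhs => rw [hτS]
      rw [kron_sum_smul_left]
      simp only [Matrix.sum_mul, Matrix.mul_sum, Matrix.smul_mul, Matrix.mul_smul]
    have e1 : ∀ i, (Real.exp (-(β * ε i)) / Zpart β HS0) * E i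
        = (((Real.exp (-(β * ε i)) / Zpart β HS0 : ℝ) : ℂ)
            * ((HSt ⊗ₖ (1 : Matrix (Fin m) (Fin m) ℂ))
              * (U * (outer' (e i) ⊗ₖ gibbs β HB) * Uᴴ)).trace).re := by
      intro i
      rw [hE' i, Complex.re_ofReal_mul]
    rw [Finset.sum_congr rfl fun i _ => e1 i, ← Complex.re_sum, sum_mul_trace, ← hmix]
  -- C4 : average bath energy
  have hC4 : ∑ j, (Real.exp (-(β * q j)) / Zpart β HB) * q j
      = ((HB * gibbs β HB).trace).re := by
    have h0 : ∀ j, (HB * outer' (f j)).trace = ((q j : ℝ) : ℂ) := by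
      intro j
      rw [trace_mul_outer', hfeig j]
      have : ∀ x, (starRingEnd ℂ) (f j x) * ((q j : ℂ) • f j) x
          = (q j : ℂ) * ((starRingEnd ℂ) (f j x) * f j x) := by
        intro x; simp only [Pi.smul_apply, smul_eq_mul]; ring
      rw [Finset.sum_congr rfl fun x _ => this x, ← Finset.mul_sum, hf j j]
      simp
    conv_rhs => rw [hτB]
    rw [Matrix.mul_sum]
    simp only [Matrix.mul_smul]
    rw [Matrix.trace_sum]
    simp only [Matrix.trace_smul, smul_eq_mul]
    rw [Complex.re_sum]
    refine Finset.sum_congr rfl fun j _ => ?_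
    rw [h0 j, ← Complex.ofReal_mul]
    exact Complex.ofReal_re _
  -- norm of evolved basis states
  have htr1 : ∀ (i : Fin n) (j : Fin m),
      (outer' (U *ᵥ fun x : Fin n × Fin m => e i x.1 * f j x.2)).trace = 1 := by
    intro i j
    rw [← outer'_conjU, trace_conjU _ _ hU1, trace_outer']
    simpa using hvF (i, j) (i, j)
  -- completeness of the primed product basis
  have hIw : ∑ k, ∑ l, outer' (fun x : Fin n × Fin m => e' k x.1 * f l x.2)
      = (1 : Matrix (Fin n × Fin m) (Fin n × Fin m) ℂ) := by
    have h := sum_outer_eq_one (fun p : Fin n × Fin m => fun x => e' p.1 x.1 * f p.2 x.2) hwF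
    rw [Fintype.sum_prod_type] at h
    exact h
  have hsum1 : ∀ (i : Fin n) (j : Fin m),
      ∑ k, ∑ l, ((outer' (fun x : Fin n × Fin m => e' k x.1 * f l x.2))
          * outer' (U *ᵥ fun x : Fin n × Fin m => e i x.1 * f j x.2)).trace = 1 := by
    intro i j
    have h1 : ∑ k, ∑ l, ((outer' (fun x : Fin n × Fin m => e' k x.1 * f l x.2))
          * outer' (U *ᵥ fun x : Fin n × Fin m => e i x.1 * f j x.2)).trace
        = ((∑ k, ∑ l, outer' (fun x : Fin n × Fin m => e' k x.1 * f l x.2))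
            * outer' (U *ᵥ fun x : Fin n × Fin m => e i x.1 * f j x.2)).trace := by
      rw [Matrix.sum_mul, Matrix.trace_sum]
      exact Finset.sum_congr rfl fun k _ => by rw [Matrix.sum_mul, Matrix.trace_sum]
    rw [h1, hIw, Matrix.one_mul, htr1 i j]
  have hKw : ∑ k, ∑ l, ((ε' k + q l : ℝ) : ℂ)
        • outer' (fun x : Fin n × Fin m => e' k x.1 * f l x.2)
      = HSt ⊗ₖ (1 : Matrix (Fin m) (Fin m) ℂ) + (1 : Matrix (Fin n) (Fin n) ℂ) ⊗ₖ HB := by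
    rw [← hK]
    exact Finset.sum_congr rfl fun k _ => Finset.sum_congr rfl fun l _ => by
      rw [outer'_kron]
  have hsumE : ∀ (i : Fin n) (j : Fin m),
      ∑ k, ∑ l, ((ε' k + q l : ℝ) : ℂ)
          * ((outer' (fun x : Fin n × Fin m => e' k x.1 * f l x.2))
            * outer' (U *ᵥ fun x : Fin n × Fin m => e i x.1 * f j x.2)).trace
        = ((HSt ⊗ₖ (1 : Matrix (Fin m) (Fin m) ℂ) + (1 : Matrix (Fin n) (Fin n) ℂ) ⊗ₖ HB)
            * outer' (U *ᵥ fun x : Fin n × Fin m => e i x.1 * f j x.2)).trace := by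
    intro i j
    rw [Finset.sum_congr rfl fun k _ => sum_mul_trace' _ _ _]
    rw [← hKw]
    rw [Matrix.sum_mul, Matrix.trace_sum]
  -- the individual TPM terms as traces
  have hterm : ∀ (i : Fin n) (j : Fin m) (k : Fin n) (l : Fin m),
      ((P i j k l * Wv i j k l : ℝ) : ℂ)
        = ((Real.exp (-(β * ε i)) / Zpart β HS0 : ℝ) : ℂ)
          * ((Real.exp (-(β * q j)) / Zpart β HB : ℝ) : ℂ)
          * ((Wv i j k l : ℝ) : ℂ)
          * ((outer' (fun x : Fin n × Fin m => e' k x.1 * f l x.2)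
              * outer' (U *ᵥ fun x : Fin n × Fin m => e i x.1 * f j x.2)).trace) := by
    intro i j k l
    rw [trace_outer'_outer']
    beta_reduce
    rw [Complex.mul_conj, ← Complex.sq_norm, hP i j k l]
    push_cast
    ring
  have hWc : (WTPM : ℂ) = ∑ i, ∑ j, ∑ k, ∑ l,
      ((Real.exp (-(β * ε i)) / Zpart β HS0 : ℝ) : ℂ)
        * ((Real.exp (-(β * q j)) / Zpart β HB : ℝ) : ℂ)
        * ((Wv i j k l : ℝ) : ℂ)
        * ((outer' (fun x : Fin n × Fin m => e' k x.1 * f l x.2)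
            * outer' (U *ᵥ fun x : Fin n × Fin m => e i x.1 * f j x.2)).trace) := by
    rw [hWTPM, Complex.ofReal_sum]
    refine Finset.sum_congr rfl fun i _ => ?_
    rw [Complex.ofReal_sum]
    refine Finset.sum_congr rfl fun j _ => ?_
    rw [Complex.ofReal_sum]
    refine Finset.sum_congr rfl fun k _ => ?_
    rw [Complex.ofReal_sum]
    exact Finset.sum_congr rfl fun l _ => hterm i j k l
  -- evaluate the inner double sums
  have hinner : ∀ (i : Fin n) (j : Fin m),
      (∑ k, ∑ l, ((Real.exp (-(β * ε i)) / Zpart β HS0 : ℝ) : ℂ)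
        * ((Real.exp (-(β * q j)) / Zpart β HB : ℝ) : ℂ)
        * ((Wv i j k l : ℝ) : ℂ)
        * ((outer' (fun x : Fin n × Fin m => e' k x.1 * f l x.2)
            * outer' (U *ᵥ fun x : Fin n × Fin m => e i x.1 * f j x.2)).trace))
      = ((Real.exp (-(β * ε i)) / Zpart β HS0 : ℝ) : ℂ)
          * ((Real.exp (-(β * q j)) / Zpart β HB : ℝ) : ℂ)
          * (((HSt ⊗ₖ (1 : Matrix (Fin m) (Fin m) ℂ)
              + (1 : Matrix (Fin n) (Fin n) ℂ) ⊗ₖ HB)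
            * outer' (U *ᵥ fun x : Fin n × Fin m => e i x.1 * f j x.2)).trace)
        - ((Real.exp (-(β * ε i)) / Zpart β HS0 : ℝ) : ℂ)
          * ((Real.exp (-(β * q j)) / Zpart β HB : ℝ) : ℂ)
          * ((ε i + q j : ℝ) : ℂ) := by
    intro i j
    have hsplit : ∀ (k : Fin n) (l : Fin m),
        ((Real.exp (-(β * ε i)) / Zpart β HS0 : ℝ) : ℂ)
          * ((Real.exp (-(β * q j)) / Zpart β HB : ℝ) : ℂ)
          * ((Wv i j k l : ℝ) : ℂ)
          * ((outer' (fun x : Fin n × Fin m => e' k x.1 * f l x.2)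
              * outer' (U *ᵥ fun x : Fin n × Fin m => e i x.1 * f j x.2)).trace)
        = ((Real.exp (-(β * ε i)) / Zpart β HS0 : ℝ) : ℂ)
            * ((Real.exp (-(β * q j)) / Zpart β HB : ℝ) : ℂ)
            * (((ε' k + q l : ℝ) : ℂ)
              * ((outer' (fun x : Fin n × Fin m => e' k x.1 * f l x.2)
                * outer' (U *ᵥ fun x : Fin n × Fin m => e i x.1 * f j x.2)).trace))
          - ((Real.exp (-(β * ε i)) / Zpart β HS0 : ℝ) : ℂ)
              * ((Real.exp (-(β * q j)) / Zpart β HB : ℝ) : ℂ)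
              * ((ε i + q j : ℝ) : ℂ)
              * ((outer' (fun x : Fin n × Fin m => e' k x.1 * f l x.2)
                * outer' (U *ᵥ fun x : Fin n × Fin m => e i x.1 * f j x.2)).trace) := by
      intro k l
      rw [hWv i j k l]
      push_cast
      ring
    rw [Finset.sum_congr rfl fun k _ => Finset.sum_congr rfl fun l _ => hsplit k l]
    rw [Finset.sum_congr rfl fun k _ => Finset.sum_sub_distrib _ _, Finset.sum_sub_distrib]
    simp only [← Finset.mul_sum]
    rw [hsumE i j, hsum1 i j, mul_one]
  -- real average of initial energies
  have hreal : ∑ i, ∑ j, (Real.exp (-(β * ε i)) / Zpart β HS0)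
        * (Real.exp (-(β * q j)) / Zpart β HB) * (ε i + q j)
      = (∑ i, (Real.exp (-(β * ε i)) / Zpart β HS0) * ε i)
        + (∑ j, (Real.exp (-(β * q j)) / Zpart β HB) * q j) := by
    have hin : ∀ i, ∑ j, (Real.exp (-(β * ε i)) / Zpart β HS0)
          * (Real.exp (-(β * q j)) / Zpart β HB) * (ε i + q j)
        = (Real.exp (-(β * ε i)) / Zpart β HS0) * ε i
          + (Real.exp (-(β * ε i)) / Zpart β HS0)
            * (∑ j, (Real.exp (-(β * q j)) / Zpart β HB) * q j) := by
      intro i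
      have : ∀ j, (Real.exp (-(β * ε i)) / Zpart β HS0)
            * (Real.exp (-(β * q j)) / Zpart β HB) * (ε i + q j)
          = (Real.exp (-(β * ε i)) / Zpart β HS0) * ε i
              * (Real.exp (-(β * q j)) / Zpart β HB)
            + (Real.exp (-(β * ε i)) / Zpart β HS0)
              * ((Real.exp (-(β * q j)) / Zpart β HB) * q j) := by
        intro j; ring
      rw [Finset.sum_congr rfl fun j _ => this j, Finset.sum_add_distrib,
        ← Finset.mul_sum, ← Finset.mul_sum, hbsum, mul_one]
    rw [Finset.sum_congr rfl fun i _ => hin i, Finset.sum_add_distrib,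
      ← Finset.sum_mul, hgsum, one_mul]
  -- the complex TPM identity
  have hC5c : (WTPM : ℂ)
      = ((HSt ⊗ₖ (1 : Matrix (Fin m) (Fin m) ℂ)
            + (1 : Matrix (Fin n) (Fin n) ℂ) ⊗ₖ HB)
          * (U * (gibbs β HS0 ⊗ₖ gibbs β HB) * Uᴴ)).trace
        - (((∑ i, (Real.exp (-(β * ε i)) / Zpart β HS0) * ε i)
            + (∑ j, (Real.exp (-(β * q j)) / Zpart β HB) * q j) : ℝ) : ℂ) := by
    rw [hWc, Finset.sum_congr rfl fun i _ => Finset.sum_congr rfl fun j _ => hinner i j]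
    rw [Finset.sum_congr rfl fun i _ => Finset.sum_sub_distrib _ _, Finset.sum_sub_distrib]
    congr 1
    · -- first part equals the big trace
      have h2 : ∀ i, ∑ j, ((Real.exp (-(β * ε i)) / Zpart β HS0 : ℝ) : ℂ)
            * ((Real.exp (-(β * q j)) / Zpart β HB : ℝ) : ℂ)
            * (((HSt ⊗ₖ (1 : Matrix (Fin m) (Fin m) ℂ)
                + (1 : Matrix (Fin n) (Fin n) ℂ) ⊗ₖ HB)
              * outer' (U *ᵥ fun x : Fin n × Fin m => e i x.1 * f j x.2)).trace)
          = ((HSt ⊗ₖ (1 : Matrix (Fin m) (Fin m) ℂ)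
              + (1 : Matrix (Fin n) (Fin n) ℂ) ⊗ₖ HB)
            * ∑ j, (((Real.exp (-(β * ε i)) / Zpart β HS0)
                  * (Real.exp (-(β * q j)) / Zpart β HB) : ℝ) : ℂ)
                • outer' (U *ᵥ fun x : Fin n × Fin m => e i x.1 * f j x.2)).trace := by
        intro i
        rw [← sum_mul_trace]
        refine Finset.sum_congr rfl fun j _ => ?_
        push_cast
        ring
      rw [Finset.sum_congr rfl fun i _ => h2 i]
      have h3 : ∀ (K : Matrix (Fin n × Fin m) (Fin n × Fin m) ℂ)
          (N : Fin n → Matrix (Fin n × Fin m) (Fin n × Fin m) ℂ),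
          ∑ i, (K * N i).trace = (K * ∑ i, N i).trace := by
        intro K N
        rw [Matrix.mul_sum, Matrix.trace_sum]
      rw [h3]
      congr 1
      rw [hX]
    · -- second part equals the real constant
      rw [← hreal, Complex.ofReal_sum]
      refine Finset.sum_congr rfl fun i _ => ?_
      rw [Complex.ofReal_sum]
      refine Finset.sum_congr rfl fun j _ => ?_
      push_cast
      ring
  -- take real parts
  have hWTPMval : WTPM
      = (((HSt ⊗ₖ (1 : Matrix (Fin m) (Fin m) ℂ))
            * (U * (gibbs β HS0 ⊗ₖ gibbs β HB) * Uᴴ)).trace).re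
        + ((((1 : Matrix (Fin n) (Fin n) ℂ) ⊗ₖ HB)
            * (U * (gibbs β HS0 ⊗ₖ gibbs β HB) * Uᴴ)).trace).re
        - ((∑ i, (Real.exp (-(β * ε i)) / Zpart β HS0) * ε i)
            + (∑ j, (Real.exp (-(β * q j)) / Zpart β HB) * q j)) := by
    have h := congrArg Complex.re hC5c
    rw [Complex.ofReal_re, Matrix.add_mul, Matrix.trace_add, Complex.sub_re,
      Complex.add_re, Complex.ofReal_re] at h
    linarith
  have hLHS : ∑ i, (Real.exp (-(β * ε i)) / Zpart β HS0) * Wg i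
      = (∑ i, (Real.exp (-(β * ε i)) / Zpart β HS0) * E i)
        - (∑ i, (Real.exp (-(β * ε i)) / Zpart β HS0) * ε i) - Qg := by
    have h : ∀ i, (Real.exp (-(β * ε i)) / Zpart β HS0) * Wg i
        = (Real.exp (-(β * ε i)) / Zpart β HS0) * E i
          - (Real.exp (-(β * ε i)) / Zpart β HS0) * ε i
          - (Real.exp (-(β * ε i)) / Zpart β HS0) * Qg := by
      intro i; rw [hWg i]; ring
    rw [Finset.sum_congr rfl fun i _ => h i, Finset.sum_sub_distrib,
      Finset.sum_sub_distrib, ← Finset.sum_mul, hgsum, one_mul]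
  have htheta : ((((1 : Matrix (Fin n) (Fin n) ℂ) ⊗ₖ HB)
        * (Θ - U * (gibbs β HS0 ⊗ₖ gibbs β HB) * Uᴴ)).trace).re
      = ((((1 : Matrix (Fin n) (Fin n) ℂ) ⊗ₖ HB) * Θ).trace).re
        - ((((1 : Matrix (Fin n) (Fin n) ℂ) ⊗ₖ HB)
            * (U * (gibbs β HS0 ⊗ₖ gibbs β HB) * Uᴴ)).trace).re := by
    rw [Matrix.mul_sub, Matrix.trace_sub, Complex.sub_re]
  rw [hLHS, htheta, hQg]
  linarith [hC3, hC4, hWTPMval]
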